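/- Let φ and ψ be probability measures on a measurable space A and n > 0 a natural number. If there exists a bounded measurable function χ : Aⁿ → [0,1] with ∫ χ d(φ^{⊗n}) = 0 and ∫ χ d(ψ^{⊗n}) = 1, then there exists a bounded measurable function χ' : A → [0,1] with ∫ χ' dφ = 0 and ∫ χ' dψ = 1. -/

import Mathlib

open MeasureTheory

/-!
For probability measures, anti-distinguishability is mutual singularity: if `χ` anti-distinguishes
`μ` from `ν` then `{χ ≠ 0}` is `μ`-null and `ν`-conull, and conversely the indicator of such a set
anti-distinguishes them. So it suffices to show that `φ^{⊗n} ⟂ₘ ψ^{⊗n}` forces `φ ⟂ₘ ψ`. Split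
`Aⁿ = A × Aⁿ⁻¹` and take a separating set `S`. For `φ`-almost every `a` the section `S_a` is
`φ^{⊗(n-1)}`-null, and for `ψ`-almost every `a` it is `ψ^{⊗(n-1)}`-conull; unless `φ ⟂ₘ ψ`, some
`a` has both properties, and then `S_a` separates the `(n-1)`-fold powers.
-/

namespace MeasureTheory.Measure

variable {α β : Type*} [MeasurableSpace α] [MeasurableSpace β]

lemma exists_and_of_not_mutuallySingular {μ ν : Measure α} {p q : α → Prop}
    (h : ¬ μ ⟂ₘ ν) (hp : ∀ᵐ a ∂μ, p a) (hq : ∀ᵐ a ∂ν, q a) : ∃ a, p a ∧ q a := by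
  by_contra! hpq
  exact h <| mutuallySingular_iff_disjoint_ae.2 <|
    Filter.disjoint_iff.2 ⟨_, hp, _, hq, Set.disjoint_left.2 hpq⟩

lemma MutuallySingular.of_prod {μ₁ ν₁ : Measure α} {μ₂ ν₂ : Measure β} [SFinite μ₂] [SFinite ν₂]
    (h : μ₁.prod μ₂ ⟂ₘ ν₁.prod ν₂) : μ₁ ⟂ₘ ν₁ ∨ μ₂ ⟂ₘ ν₂ := by
  refine or_iff_not_imp_left.2 fun h₁ => ?_
  obtain ⟨a, hμ, hν⟩ := exists_and_of_not_mutuallySingular h₁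
    (measure_ae_null_of_prod_null h.measure_nullSet)
    (measure_ae_null_of_prod_null h.measure_compl_nullSet)
  exact ⟨Prod.mk a ⁻¹' h.nullSet, measurable_prodMk_left h.measurableSet_nullSet, hμ, hν⟩

lemma MutuallySingular.of_pi_fin {μ ν : Measure α} [SigmaFinite μ] [SigmaFinite ν] :
    ∀ {n : ℕ}, (Measure.pi fun _ : Fin n => μ) ⟂ₘ (Measure.pi fun _ : Fin n => ν) → μ ⟂ₘ ν
  | 0, h => by
    rw [pi_of_empty, pi_of_empty, MutuallySingular.self_iff] at h
    exact absurd h (NeZero.ne _)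
  | n + 1, h => by
    let e := MeasurableEquiv.piFinSuccAbove (fun _ : Fin (n + 1) => α) 0
    have hprod := e.measurableEmbedding.mutuallySingular_map h
    rw [(measurePreserving_piFinSuccAbove (fun _ => μ) 0).map_eq,
      (measurePreserving_piFinSuccAbove (fun _ => ν) 0).map_eq] at hprod
    exact hprod.of_prod.elim id of_pi_fin

end MeasureTheory.Measure

section

variable {X : Type*} [MeasurableSpace X]

def AntiDistinguishes (f : X → ℝ) (μ ν : Measure X) : Prop :=
  Measurable f ∧ (∀ a, 0 ≤ f a) ∧ (∀ a, f a ≤ 1) ∧ (∫ a, f a ∂μ) = 0 ∧ (∫ a, f a ∂ν) = 1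

lemma AntiDistinguishes.mutuallySingular {f : X → ℝ} {μ ν : Measure X} [IsFiniteMeasure μ]
    [IsProbabilityMeasure ν] (h : AntiDistinguishes f μ ν) : μ ⟂ₘ ν := by
  obtain ⟨hf, hf0, hf1, hμ, hν⟩ := h
  have hint (ρ : Measure X) [IsFiniteMeasure ρ] : Integrable f ρ :=
    .of_bound hf.aestronglyMeasurable 1 <| ae_of_all _ fun a => by
      rw [Real.norm_eq_abs, abs_le]; exact ⟨by linarith [hf0 a], hf1 a⟩
  have hμ0 : f =ᵐ[μ] 0 := (integral_eq_zero_iff_of_nonneg hf0 (hint μ)).1 hμ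
  have hν1 : (fun a => 1 - f a) =ᵐ[ν] 0 := by
    refine (integral_eq_zero_iff_of_nonneg (fun a => sub_nonneg.2 (hf1 a))
      ((integrable_const 1).sub (hint ν))).1 ?_
    rw [integral_sub (integrable_const 1) (hint ν), hν, integral_const, probReal_univ]
    simp
  refine ⟨{a | f a ≠ 0}, hf (measurableSet_singleton 0).compl, ae_iff.1 hμ0,
    measure_mono_null (fun a ha => ?_) (ae_iff.1 hν1)⟩
  simp_all

lemma MeasureTheory.Measure.MutuallySingular.exists_antiDistinguishes {μ ν : Measure X}
    [IsProbabilityMeasure ν] (h : μ ⟂ₘ ν) : ∃ f : X → ℝ, AntiDistinguishes f μ ν := by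
  refine ⟨h.nullSet.indicator 1, measurable_one.indicator h.measurableSet_nullSet,
    fun a => Set.indicator_nonneg (fun _ _ => zero_le_one) a,
    fun a => Set.indicator_le_self' (fun _ _ => zero_le_one) a, ?_, ?_⟩
  · rw [integral_indicator_one h.measurableSet_nullSet, measureReal_def, h.measure_nullSet,
      ENNReal.toReal_zero]
  · rw [integral_indicator_one h.measurableSet_nullSet, measureReal_def,
      (prob_compl_eq_zero_iff h.measurableSet_nullSet).1 h.measure_compl_nullSet,
      ENNReal.toReal_one]

end

theorem antidistinguish_of_tensor_powers_general
    {A : Type*} [MeasurableSpace A] (φ ψ : Measure A)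
    [IsProbabilityMeasure φ] [IsProbabilityMeasure ψ]
    (n : ℕ)
    (χ : (Fin n → A) → ℝ) (hχ : Measurable χ)
    (hχ0 : ∀ a, 0 ≤ χ a) (hχ1 : ∀ a, χ a ≤ 1)
    (h0 : ∫ a, χ a ∂(Measure.pi fun _ : Fin n => φ) = 0)
    (h1 : ∫ a, χ a ∂(Measure.pi fun _ : Fin n => ψ) = 1) :
    ∃ χ' : A → ℝ, Measurable χ' ∧ (∀ a, 0 ≤ χ' a) ∧ (∀ a, χ' a ≤ 1) ∧
      (∫ a, χ' a ∂φ) = 0 ∧ (∫ a, χ' a ∂ψ) = 1 := by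
  have hpow : (Measure.pi fun _ : Fin n => φ) ⟂ₘ (Measure.pi fun _ : Fin n => ψ) :=
    AntiDistinguishes.mutuallySingular ⟨hχ, hχ0, hχ1, h0, h1⟩
  exact hpow.of_pi_fin.exists_antiDistinguishes

/-- If `χ : Aⁿ → [0,1]` anti-distinguishes the `n`-fold product measures
`φ^{⊗n}` from `ψ^{⊗n}`, then some `χ' : A → [0,1]` anti-distinguishes `φ` from `ψ`. -/
theorem antidistinguish_of_tensor_powers
    {A : Type*} [MeasurableSpace A] (φ ψ : Measure A)
    [IsProbabilityMeasure φ] [IsProbabilityMeasure ψ]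
    (n : ℕ) (hn : 0 < n)
    (χ : (Fin n → A) → ℝ) (hχ : Measurable χ)
    (hχ0 : ∀ a, 0 ≤ χ a) (hχ1 : ∀ a, χ a ≤ 1)
    (h0 : ∫ a, χ a ∂(Measure.pi fun _ : Fin n => φ) = 0)
    (h1 : ∫ a, χ a ∂(Measure.pi fun _ : Fin n => ψ) = 1) :
    ∃ χ' : A → ℝ, Measurable χ' ∧ (∀ a, 0 ≤ χ' a) ∧ (∀ a, χ' a ≤ 1) ∧
      (∫ a, χ' a ∂φ) = 0 ∧ (∫ a, χ' a ∂ψ) = 1 :=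
  antidistinguish_of_tensor_powers_general φ ψ n χ hχ hχ0 hχ1 h0 h1
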